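/- With T̂(k) the arrowhead matrix of the previous statement, det(I − T̂(k)) = 0 and det(−I − T̂(k)) = 0 for every k ∈ [0,2π)^d; i.e. both +1 and −1 are eigenvalues of T̂(k). -/

import Mathlib

/-!
The determinant of an arrowhead matrix with corner `a`, top row `r`, left column `c` and
diagonal `D` is `a ∏ Dᵢ - ∑ⱼ rⱼ cⱼ ∏_{i ≠ j} Dᵢ`. Multiplying by a triangular arrowhead matrix
gives this identity after multiplication by `∏ Dᵢ`; replacing `Dᵢ` by `X + Dᵢ` over `R[X]` makes
that factor monic, hence cancellable, and evaluating at `0` gives it exactly.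

For `μ = ±1` the matrix `μ - T̂(k)` is an arrowhead matrix with
`rⱼ cⱼ = sin² kⱼ / d = (μ - cos kⱼ)(μ + cos kⱼ) / d`, so its determinant is
`(μ - a₀ - ∑ⱼ (μ - cos kⱼ) / d) ∏ⱼ (μ + cos kⱼ)`, and the first factor vanishes by the
definition of `a₀`.
-/

open Matrix Finset Polynomial

namespace Matrix

variable {R ι : Type*} [DecidableEq ι]

def arrowhead [Zero R] (a : R) (r c D : ι → R) : Matrix (Option ι) (Option ι) R :=
  of fun i j =>
    match i, j with
    | none, none => a
    | none, some j => r j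
    | some i, none => c i
    | some i, some j => if i = j then D i else 0

theorem arrowhead_transpose [Zero R] (a : R) (r c D : ι → R) :
    (arrowhead a r c D)ᵀ = arrowhead a c r D := by
  ext (_ | i) (_ | j) <;> simp only [arrowhead, transpose_apply, of_apply]
  grind

theorem smul_one_sub_arrowhead [Ring R] (μ a : R) (r c D : ι → R) :
    μ • (1 : Matrix (Option ι) (Option ι) R) - arrowhead a r c D =
      arrowhead (μ - a) (-r) (-c) (fun i => μ - D i) := by
  ext (_ | i) (_ | j) <;> simp [arrowhead, one_apply]
  grind

variable [CommRing R] [Fintype ι]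

theorem det_arrowhead_col_zero (a : R) (r D : ι → R) :
    (arrowhead a r 0 D).det = a * ∏ i, D i := by
  let e := Equiv.optionEquivSumPUnit.{0} ι
  have hblocks : reindex e e (arrowhead a r 0 D) =
      fromBlocks (diagonal D) 0 (of fun _ j => r j) (of fun _ _ => a) := by
    ext (i | _) (j | _) <;> simp [e, arrowhead, diagonal_apply]
  rw [← det_reindex_self e, hblocks, det_fromBlocks_zero₁₂, det_diagonal, det_unique, mul_comm]
  rfl

theorem det_arrowhead_row_zero (a : R) (c D : ι → R) :
    (arrowhead a 0 c D).det = a * ∏ i, D i := by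
  rw [← det_transpose, arrowhead_transpose, det_arrowhead_col_zero]

theorem arrowhead_mul_arrowhead_row_zero (a a' : R) (r c D c' D' : ι → R) :
    arrowhead a r c D * arrowhead a' 0 c' D' =
      arrowhead (a * a' + ∑ j, r j * c' j) (fun j => r j * D' j)
        (fun i => c i * a' + D i * c' i) (fun i => D i * D' i) := by
  ext (_ | i) (_ | j) <;> simp [arrowhead, mul_apply, Fintype.sum_option, ite_mul]
  grind

theorem det_arrowhead_mul_prod (a : R) (r c D : ι → R) :
    (arrowhead a r c D).det * ∏ i, D i =
      (a * ∏ i, D i - ∑ j, r j * c j * ∏ i ∈ univ.erase j, D i) * ∏ i, D i := by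
  have hprod : arrowhead a r c D *
      arrowhead (∏ i, D i) 0 (fun j => -(c j * ∏ i ∈ univ.erase j, D i)) 1 =
      arrowhead (a * ∏ i, D i - ∑ j, r j * c j * ∏ i ∈ univ.erase j, D i) r 0 D := by
    rw [arrowhead_mul_arrowhead_row_zero]
    congr 1
    · simp only [mul_neg, sum_neg_distrib, mul_assoc, sub_eq_add_neg]
    · ext j; simp
    · ext i
      rw [mul_neg, mul_left_comm, mul_prod_erase _ _ (mem_univ i), mul_comm, add_neg_cancel,
        Pi.zero_apply]
    · ext i; simp
  have hdet := congrArg det hprod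
  rwa [det_mul, det_arrowhead_row_zero, det_arrowhead_col_zero, Pi.one_def, prod_const_one,
    mul_one] at hdet

theorem det_arrowhead (a : R) (r c D : ι → R) :
    (arrowhead a r c D).det = a * ∏ i, D i - ∑ j, r j * c j * ∏ i ∈ univ.erase j, D i := by
  let Dₓ : ι → R[X] := fun i => X + C (D i)
  have hmonic : (∏ i, Dₓ i).Monic := monic_prod_of_monic _ _ fun i _ => monic_X_add_C (D i)
  have hgeneric := hmonic.isRegular.right (det_arrowhead_mul_prod (C a) (C ∘ r) (C ∘ c) Dₓ)
  have hmap : (arrowhead (C a) (C ∘ r) (C ∘ c) Dₓ).map (evalRingHom 0) = arrowhead a r c D := by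
    ext (_ | i) (_ | j) <;> simp [arrowhead, Dₓ]
    split_ifs <;> simp
  rw [← hmap, ← RingHom.mapMatrix_apply, ← RingHom.map_det, hgeneric]
  simp [Dₓ, eval_finsetSum, eval_prod]

theorem det_arrowhead_of_mul_eq (a : R) (r c D w : ι → R) (h : ∀ j, r j * c j = w j * D j) :
    (arrowhead a r c D).det = (a - ∑ j, w j) * ∏ i, D i := by
  rw [det_arrowhead, sub_mul, sum_mul]
  congr 1
  refine sum_congr rfl fun j _ => ?_
  rw [h, mul_assoc, mul_prod_erase _ _ (mem_univ j)]

end Matrix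

theorem arrowhead_pm_one_eigenvalues (d : ℕ) (hd : 1 ≤ d) (k : Fin d → ℝ)
    (a₀ : ℂ) (ha₀ : a₀ = (1 / d : ℂ) * ∑ j, (Real.cos (k j) : ℂ))
    (T : Matrix (Option (Fin d)) (Option (Fin d)) ℂ)
    (hT : T = Matrix.of fun i j =>
      match i, j with
      | none, none => a₀
      | none, some j => (-Complex.I / (Real.sqrt d : ℂ)) * (Real.sin (k j) : ℂ)
      | some i, none => (Complex.I / (Real.sqrt d : ℂ)) * (Real.sin (k i) : ℂ)
      | some i, some j => if i = j then -(Real.cos (k i) : ℂ) else 0) :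
    ((1 : Matrix (Option (Fin d)) (Option (Fin d)) ℂ) - T).det = 0 ∧
    (-(1 : Matrix (Option (Fin d)) (Option (Fin d)) ℂ) - T).det = 0 := by
  have hT' : T = arrowhead a₀ (fun j => -Complex.I / (Real.sqrt d : ℂ) * Real.sin (k j))
      (fun i => Complex.I / (Real.sqrt d : ℂ) * Real.sin (k i)) (fun i => -Real.cos (k i)) := by
    rw [hT]; ext (_ | i) (_ | j) <;> rfl
  have hd₀ : (d : ℂ) ≠ 0 := by exact_mod_cast (by omega : d ≠ 0)
  have hsqrt : (Real.sqrt d : ℂ) ^ 2 = d := by exact_mod_cast Real.sq_sqrt d.cast_nonneg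
  have hvanish (μ : ℂ) (hμ : μ ^ 2 = 1) : (μ • 1 - T).det = 0 := by
    rw [hT', smul_one_sub_arrowhead,
      det_arrowhead_of_mul_eq _ _ _ _ (fun j => (μ - Real.cos (k j)) / d)]
    · have htrace : μ - a₀ - ∑ j, (μ - Real.cos (k j)) / (d : ℂ) = 0 := by
        rw [ha₀, ← sum_div, sum_sub_distrib, sum_const, card_univ, Fintype.card_fin, nsmul_eq_mul]
        field_simp
        ring
      rw [htrace, zero_mul]
    · intro j
      have hpyth : (Real.sin (k j) : ℂ) ^ 2 + (Real.cos (k j) : ℂ) ^ 2 = 1 := by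
        exact_mod_cast Real.sin_sq_add_cos_sq (k j)
      calc -(-Complex.I / (Real.sqrt d : ℂ) * Real.sin (k j)) *
            -(Complex.I / (Real.sqrt d : ℂ) * Real.sin (k j))
          = -Complex.I ^ 2 * (Real.sin (k j) : ℂ) ^ 2 / (Real.sqrt d : ℂ) ^ 2 := by ring
        _ = (μ - Real.cos (k j)) / d * (μ - -Real.cos (k j)) := by
          rw [Complex.I_sq, hsqrt]
          field_simp
          linear_combination hpyth - hμ
  constructor
  · simpa using hvanish 1 (one_pow 2)
  · simpa using hvanish (-1) (by norm_num)
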